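/- Let u and w be pin words and let u = u^(1)…u^(j) be the strong numeral-led factor decomposition of u. Then u ≼ w if and only if w can be factored as w = v^(1)w^(1)v^(2)w^(2)…v^(j)w^(j)v^(j+1) such that for every i ∈ {1,…,j}, w^(i) belongs to SP ∪ M and φ(w^(i)) has a factor in φ(u^(i)). -/

import Mathlib

namespace PinStmt

abbrev Point : Type := ℝ × ℝ

inductive Letter : Type
  | n1 | n2 | n3 | n4 | U | D | L | R
deriving DecidableEq

def Letter.isNum : Letter → Bool
  | .n1 | .n2 | .n3 | .n4 => true
  | _ => false

/-- `c` is one of the numeral letters 1,2,3,4. -/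
def Letter.IsNumeral (c : Letter) : Prop := c.isNum = true

/-- `c` is one of the direction letters U,D,L,R. -/
def Letter.IsDirection (c : Letter) : Prop := c.isNum = false

/-- `q i` lies strictly above all of `q 0, …, q (i-1)`. -/
def AboveAll (q : ℕ → Point) (i : ℕ) : Prop := ∀ j < i, (q j).2 < (q i).2
def BelowAll (q : ℕ → Point) (i : ℕ) : Prop := ∀ j < i, (q i).2 < (q j).2
def RightAll (q : ℕ → Point) (i : ℕ) : Prop := ∀ j < i, (q j).1 < (q i).1
def LeftAll  (q : ℕ → Point) (i : ℕ) : Prop := ∀ j < i, (q i).1 < (q j).1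

/-- The vertical line through `q i` strictly separates `q (i-1)` from `{q j | j < i-1}`. -/
def VLineSep (q : ℕ → Point) (i : ℕ) : Prop :=
  ((q (i - 1)).1 < (q i).1 ∧ ∀ j < i - 1, (q i).1 < (q j).1) ∨
  ((q i).1 < (q (i - 1)).1 ∧ ∀ j < i - 1, (q j).1 < (q i).1)

/-- The horizontal line through `q i` strictly separates `q (i-1)` from `{q j | j < i-1}`. -/
def HLineSep (q : ℕ → Point) (i : ℕ) : Prop :=
  ((q (i - 1)).2 < (q i).2 ∧ ∀ j < i - 1, (q i).2 < (q j).2) ∨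
  ((q i).2 < (q (i - 1)).2 ∧ ∀ j < i - 1, (q j).2 < (q i).2)

/-- Separation condition for the pin `q i`. -/
def SepCond (q : ℕ → Point) (i : ℕ) : Prop := VLineSep q i ∨ HLineSep q i

/-- Independence condition: neither line through `q i` splits `{q j | j < i}` in two
nonempty parts. -/
def IndepCond (q : ℕ → Point) (i : ℕ) : Prop :=
  ¬((∃ j < i, (q j).1 < (q i).1) ∧ (∃ j < i, (q i).1 < (q j).1)) ∧
  ¬((∃ j < i, (q j).2 < (q i).2) ∧ (∃ j < i, (q i).2 < (q j).2))

/-- `q i` lies outside the bounding box of `{q j | j < i}`. -/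
def OutsideBox (q : ℕ → Point) (i : ℕ) : Prop :=
  RightAll q i ∨ LeftAll q i ∨ AboveAll q i ∨ BelowAll q i

/-- `(q 0, …, q (m-1))` is a pin sequence. -/
def IsPinSeq (q : ℕ → Point) (m : ℕ) : Prop :=
  (∀ i < m, ∀ j < m, i ≠ j → (q i).1 ≠ (q j).1 ∧ (q i).2 ≠ (q j).2) ∧
  (∀ i, 1 ≤ i → i < m → OutsideBox q i ∧ (SepCond q i ∨ IndepCond q i))

/-- `(p 0, …, p (n-1))` is a pin representation of `σ`, where `f` sends the time index of a
pin to the position (index) of the corresponding point in the diagram of `σ`. -/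
def IsPinReprWith {n : ℕ} (σ : Equiv.Perm (Fin n)) (p : ℕ → Point)
    (f : Fin n ≃ Fin n) : Prop :=
  IsPinSeq p n ∧ ∀ j k : Fin n,
    ((p j.val).1 < (p k.val).1 ↔ f j < f k) ∧
    ((p j.val).2 < (p k.val).2 ↔ σ (f j) < σ (f k))

def IsPinRepr {n : ℕ} (σ : Equiv.Perm (Fin n)) (p : ℕ → Point) : Prop :=
  ∃ f, IsPinReprWith σ p f

/-- `σ` is a pin-permutation. -/
def IsPinPerm {n : ℕ} (σ : Equiv.Perm (Fin n)) : Prop := ∃ p, IsPinRepr σ p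

/-- Prepend the origin `p0` to the sequence of pins `p`. -/
def withOrigin (p0 : Point) (p : ℕ → Point) : ℕ → Point
  | 0 => p0
  | i + 1 => p i

/-- The letter encoding the pin `q i` (where `q 0` is the origin). -/
def LetterIs (q : ℕ → Point) (i : ℕ) : Letter → Prop
  | .U => 2 ≤ i ∧ SepCond q i ∧ AboveAll q i
  | .D => 2 ≤ i ∧ SepCond q i ∧ BelowAll q i
  | .L => 2 ≤ i ∧ SepCond q i ∧ LeftAll q i
  | .R => 2 ≤ i ∧ SepCond q i ∧ RightAll q i
  | .n1 => IndepCond q i ∧ RightAll q i ∧ AboveAll q i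
  | .n2 => IndepCond q i ∧ LeftAll q i ∧ AboveAll q i
  | .n3 => IndepCond q i ∧ LeftAll q i ∧ BelowAll q i
  | .n4 => IndepCond q i ∧ RightAll q i ∧ BelowAll q i

/-- `w` is the pin word associated with the pin sequence `(q 0, q 1, …, q n)`,
whose origin is `q 0`. -/
def WordOf (q : ℕ → Point) (n : ℕ) (w : List Letter) : Prop :=
  w.length = n ∧ ∀ i < n, LetterIs q (i + 1) (w.getD i Letter.U)

/-- `P(σ)`: the set of pin words of the permutation `σ`. -/
def PinWords {n : ℕ} (σ : Equiv.Perm (Fin n)) : Set (List Letter) :=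
  { w | ∃ (p : ℕ → Point) (p0 : Point), IsPinRepr σ p ∧
        IsPinSeq (withOrigin p0 p) (n + 1) ∧ WordOf (withOrigin p0 p) n w }

/-- The set of pin words associated with the fixed pin representation `p`
over all admissible origins. -/
def WordsOfRepr (n : ℕ) (p : ℕ → Point) : Set (List Letter) :=
  { w | ∃ p0 : Point, IsPinSeq (withOrigin p0 p) (n + 1) ∧ WordOf (withOrigin p0 p) n w }

/-- `(p 0, …, p (n-1))` is a proper pin sequence: every pin from the third one on
satisfies the separation condition. -/
def IsProperSeq (p : ℕ → Point) (n : ℕ) : Prop :=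
  IsPinSeq p n ∧ ∀ i, 2 ≤ i → i < n → SepCond p i

/-- `σ` is a proper pin-permutation. -/
def IsProperPinPerm {n : ℕ} (σ : Equiv.Perm (Fin n)) : Prop :=
  ∃ p, IsPinRepr σ p ∧ IsProperSeq p n

/-- A strict pin word: a numeral followed only by directions. -/
def IsStrict (w : List Letter) : Prop :=
  ∃ c cs, w = c :: cs ∧ c.IsNumeral ∧ ∀ d ∈ cs, d.IsDirection

/-- A quasi-strict pin word: two numerals followed only by directions. -/
def IsQuasiStrict (w : List Letter) : Prop :=
  ∃ c₁ c₂ cs, w = c₁ :: c₂ :: cs ∧ c₁.IsNumeral ∧ c₂.IsNumeral ∧ ∀ d ∈ cs, d.IsDirection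

/-- `w` is a pin word (of some permutation). -/
def IsPinWord (w : List Letter) : Prop :=
  ∃ (n : ℕ) (σ : Equiv.Perm (Fin n)), w ∈ PinWords σ

/-- `SP`: the set of strict pin words. -/
def SPset : Set (List Letter) := { w | IsPinWord w ∧ IsStrict w }

def phi2 : Letter → Letter → List Letter
  | .n1, .R => [.R, .U, .R]
  | .n2, .R => [.L, .U, .R]
  | .n3, .R => [.L, .D, .R]
  | .n4, .R => [.R, .D, .R]
  | .n1, .L => [.R, .U, .L]
  | .n2, .L => [.L, .U, .L]
  | .n3, .L => [.L, .D, .L]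
  | .n4, .L => [.R, .D, .L]
  | .n1, .U => [.U, .R, .U]
  | .n2, .U => [.U, .L, .U]
  | .n3, .U => [.D, .L, .U]
  | .n4, .U => [.D, .R, .U]
  | .n1, .D => [.U, .R, .D]
  | .n2, .D => [.U, .L, .D]
  | .n3, .D => [.D, .L, .D]
  | .n4, .D => [.D, .R, .D]
  | _, _ => []

def phi1 : Letter → Set (List Letter)
  | .n1 => {[.U, .R], [.R, .U]}
  | .n2 => {[.U, .L], [.L, .U]}
  | .n3 => {[.D, .L], [.L, .D]}
  | .n4 => {[.R, .D], [.D, .R]}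
  | _ => ∅

def phiInv2 : Letter → Letter → Letter
  | .U, .R => .n1
  | .R, .U => .n1
  | .U, .L => .n2
  | .L, .U => .n2
  | .D, .L => .n3
  | .L, .D => .n3
  | .R, .D => .n4
  | .D, .R => .n4
  | _, _ => .n1

/-- `φ(u)`, as a set of words: a two-element set when `u` is a single numeral,
a singleton `{φ(u)}` when `u` is a strict pin word of length at least 2, and
the identity (as a singleton) on words of `M`. -/
def phiSet : List Letter → Set (List Letter)
  | [] => {[]}
  | [c] => if c.isNum then phi1 c else {[c]}
  | c :: d :: rest => if c.isNum then {phi2 c d ++ rest} else {c :: d :: rest}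

/-- The quadrant numeral `q(c,d)`. -/
def quadNum (c d : Letter) : Letter :=
  if c.isNum then
    match phi2 c d with
    | [_, b, e] => phiInv2 b e
    | _ => Letter.n1
  else phiInv2 c d

/-- `us` is the strong numeral-led factor decomposition of `u`. -/
def IsSNLD (u : List Letter) (us : List (List Letter)) : Prop :=
  us.flatten = u ∧ ∀ v ∈ us, IsStrict v

def interleave : List (List Letter) → List (List Letter) → List Letter
  | [], _ => []
  | v :: vs, [] => v ++ interleave vs []
  | v :: vs, w :: ws => v ++ w ++ interleave vs ws

/-- The condition on the pieces `v^(i)`, `w^(i)`, `u^(i)` in the definition of `≼`. -/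
def PieceCond (v wi ui : List Letter) : Prop :=
  (∃ c cs, wi = c :: cs ∧ c.IsNumeral ∧ wi = ui) ∨
  (∃ d ds c, wi = d :: ds ∧ d.IsDirection ∧ v ≠ [] ∧ v.getLast? = some c ∧
    ui = quadNum c d :: ds)

/-- The order `u ≼ w` on pin words. -/
def PinOrder (u w : List Letter) : Prop :=
  ∃ us, IsSNLD u us ∧
    ∃ vs ws : List (List Letter), ws.length = us.length ∧ vs.length = us.length + 1 ∧
      w = interleave vs ws ∧
      ∀ i < us.length, PieceCond (vs.getD i []) (ws.getD i []) (us.getD i [])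

def IsVert (c : Letter) : Prop := c = Letter.U ∨ c = Letter.D
def IsHoriz (c : Letter) : Prop := c = Letter.L ∨ c = Letter.R

/-- `M`: words over `{U,D,L,R}` of length at least 2 with no factor in
`{UU,UD,DU,DD,LL,LR,RL,RR}`. -/
def MSet : Set (List Letter) :=
  { w | 2 ≤ w.length ∧ (∀ c ∈ w, c.IsDirection) ∧
        ∀ a c : Letter, [a, c] <:+: w →
          ¬(IsVert a ∧ IsVert c) ∧ ¬(IsHoriz a ∧ IsHoriz c) }

/-- `A*`: all words over the direction alphabet `A = {U,D,L,R}`. -/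
def Astar : Set (List Letter) := { w | ∀ c ∈ w, c.IsDirection }

/-- Concatenation of languages. -/
def LMul (X Y : Set (List Letter)) : Set (List Letter) :=
  { w | ∃ x ∈ X, ∃ y ∈ Y, w = x ++ y }

/-- The language `L(u) = A* φ(u^(1)) A* φ(u^(2)) … A* φ(u^(j)) A*`. -/
def LangOf (u : List Letter) : Set (List Letter) :=
  { m | ∃ us, IsSNLD u us ∧
      ∃ vs ws : List (List Letter), ws.length = us.length ∧ vs.length = us.length + 1 ∧
        m = interleave vs ws ∧ (∀ v ∈ vs, v ∈ Astar) ∧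
        ∀ i < us.length, ws.getD i [] ∈ phiSet (us.getD i []) }

/-- The language `L_π = ⋃_{u ∈ P(π)} L(u)`. -/
def Lperm {n : ℕ} (π : Equiv.Perm (Fin n)) : Set (List Letter) :=
  { m | ∃ u ∈ PinWords π, m ∈ LangOf u }

/-- `π ≤ σ`: the permutation `π` is a pattern of the permutation `σ`. -/
def IsPattern {k n : ℕ} (π : Equiv.Perm (Fin k)) (σ : Equiv.Perm (Fin n)) : Prop :=
  ∃ g : Fin k → Fin n, StrictMono g ∧ ∀ a b : Fin k, (π a < π b ↔ σ (g a) < σ (g b))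

/-- `q i` lies in the quadrant (given by a numeral letter) of the bounding box of
`{q j | j < m}`. -/
def InQuadOf (q : ℕ → Point) (i m : ℕ) : Letter → Prop
  | .n1 => (∀ j < m, (q j).1 < (q i).1) ∧ (∀ j < m, (q j).2 < (q i).2)
  | .n2 => (∀ j < m, (q i).1 < (q j).1) ∧ (∀ j < m, (q j).2 < (q i).2)
  | .n3 => (∀ j < m, (q i).1 < (q j).1) ∧ (∀ j < m, (q i).2 < (q j).2)
  | .n4 => (∀ j < m, (q j).1 < (q i).1) ∧ (∀ j < m, (q i).2 < (q j).2)
  | _ => False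


/-- `σ = ⊕[π_0, …, π_(r-1)]` where the `k`-th child occupies positions and values
`[b k, b (k+1))`. -/
def SumDecomp {n : ℕ} (σ : Equiv.Perm (Fin n)) (r : ℕ) (b : ℕ → ℕ) : Prop :=
  b 0 = 0 ∧ b r = n ∧ (∀ k < r, b k < b (k + 1)) ∧
  ∀ k < r, ∀ i : Fin n, b k ≤ i.val → i.val < b (k + 1) →
    b k ≤ (σ i).val ∧ (σ i).val < b (k + 1)

/-- The child of `σ` occupying positions `[lo, hi)` is ⊕-indecomposable. -/
def ChildIndecomp {n : ℕ} (σ : Equiv.Perm (Fin n)) (lo hi : ℕ) : Prop :=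
  ¬ ∃ m, lo < m ∧ m < hi ∧ ∀ i : Fin n, lo ≤ i.val → i.val < m → (σ i).val < m

/-- The pin read at time `a` belongs to the `k`-th child (`f` sends times to positions). -/
def PinInChild {n : ℕ} (b : ℕ → ℕ) (f : Fin n ≃ Fin n) (a : Fin n) (k : ℕ) : Prop :=
  b k ≤ (f a).val ∧ (f a).val < b (k + 1)

/-- The set of (times of) pins belonging to the `k`-th child. -/
def ChildPins {n : ℕ} (b : ℕ → ℕ) (f : Fin n ≃ Fin n) (k : ℕ) : Set (Fin n) :=
  { a | PinInChild b f a k }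

/-- The starting times of the maximal runs of consecutive reading times in `S`. -/
def PieceStarts {n : ℕ} (S : Set (Fin n)) : Set (Fin n) :=
  { a | a ∈ S ∧ ∀ c : Fin n, c.val + 1 = a.val → c ∉ S }

/-- `S` is read in exactly `k` pieces. -/
def ReadInPieces {n : ℕ} (S : Set (Fin n)) (k : ℕ) : Prop := (PieceStarts S).ncard = k

/-- The pins of `D` are all read before the pins of `C`. -/
def ReadBefore {n : ℕ} (D C : Set (Fin n)) : Prop := ∀ a ∈ D, ∀ c ∈ C, a < c

/-- The infinite oscillating sequence `ω = 3 1 5 2 7 4 9 6 …` (1-indexed). -/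
def omegaSeq (i : ℕ) : ℕ := if i = 2 then 1 else if i % 2 = 1 then i + 2 else i - 2

/-- `π` is a pattern of some prefix of the infinite oscillating sequence `ω`. -/
def IsOmegaPattern {k : ℕ} (π : Equiv.Perm (Fin k)) : Prop :=
  ∃ g : Fin k → ℕ, StrictMono g ∧ (∀ a, 1 ≤ g a) ∧
    ∀ a b : Fin k, (π a < π b ↔ omegaSeq (g a) < omegaSeq (g b))

/-- The interval of positions `[lo, lo+len)` is a block of `σ`. -/
def IsBlockOf {n : ℕ} (σ : Equiv.Perm (Fin n)) (lo len : ℕ) : Prop :=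
  lo + len ≤ n ∧ ∃ vlo, ∀ i : Fin n,
    (lo ≤ i.val ∧ i.val < lo + len) ↔ (vlo ≤ (σ i).val ∧ (σ i).val < vlo + len)

/-- `σ` is a simple permutation. -/
def IsSimplePerm {n : ℕ} (σ : Equiv.Perm (Fin n)) : Prop :=
  4 ≤ n ∧ ∀ lo len, IsBlockOf σ lo len → len ≤ 1 ∨ len = n

/-- `π` is the permutation whose one-line notation is the list `l`. -/
def PermMatches {k : ℕ} (π : Equiv.Perm (Fin k)) (l : List ℕ) : Prop :=
  l.length = k ∧ ∀ i : Fin k, (π i).val + 1 = l.getD i.val 0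

/-- `ξ` is an increasing oscillation. -/
def IsIncrOsc {k : ℕ} (ξ : Equiv.Perm (Fin k)) : Prop :=
  PermMatches ξ [1] ∨ PermMatches ξ [2, 1] ∨ PermMatches ξ [2, 3, 1] ∨
  PermMatches ξ [3, 1, 2] ∨ (4 ≤ k ∧ IsSimplePerm ξ ∧ IsOmegaPattern ξ)

/-- The child of `σ` occupying positions `[lo, hi)` is order-isomorphic to `ξ`. -/
def ChildIsPerm {n m : ℕ} (σ : Equiv.Perm (Fin n)) (lo hi : ℕ)
    (ξ : Equiv.Perm (Fin m)) : Prop :=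
  lo + m = hi ∧ ∀ (a c : Fin m) (ia ic : Fin n), ia.val = lo + a.val → ic.val = lo + c.val →
    ((σ ia).val < (σ ic).val ↔ (ξ a).val < (ξ c).val)

/-- The child of `σ` occupying positions `[lo, hi)` is an increasing oscillation. -/
def ChildIsIncrOsc {n : ℕ} (σ : Equiv.Perm (Fin n)) (lo hi : ℕ) : Prop :=
  ∃ (m : ℕ) (ξ : Equiv.Perm (Fin m)), IsIncrOsc ξ ∧ ChildIsPerm σ lo hi ξ

/-- `τ = ⊕[ξ, η]`. -/
def IsDSum2 {m k l : ℕ} (τ : Equiv.Perm (Fin m)) (ξ : Equiv.Perm (Fin k))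
    (η : Equiv.Perm (Fin l)) : Prop :=
  m = k + l ∧ (∀ i : Fin m, i.val < k → (τ i).val < k) ∧
    ChildIsPerm τ 0 k ξ ∧ ChildIsPerm τ k m η

/-- The origin `p0` lies in quadrant 1 of the bounding box of `{p j | j < n}`. -/
def OriginQ1 (p0 : Point) (p : ℕ → Point) (n : ℕ) : Prop :=
  ∀ j < n, (p j).1 < p0.1 ∧ (p j).2 < p0.2

/-- The origin `p0` lies in quadrant 3 of the bounding box of `{p j | j < n}`. -/
def OriginQ3 (p0 : Point) (p : ℕ → Point) (n : ℕ) : Prop :=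
  ∀ j < n, p0.1 < (p j).1 ∧ p0.2 < (p j).2

/-- `P^(1)(ξ)`: pin words of `ξ` whose origin lies in quadrant 1 w.r.t. the points of `ξ`. -/
def PinWordsQ1 {n : ℕ} (ξ : Equiv.Perm (Fin n)) : Set (List Letter) :=
  { w | ∃ (p : ℕ → Point) (p0 : Point), IsPinRepr ξ p ∧
        IsPinSeq (withOrigin p0 p) (n + 1) ∧ WordOf (withOrigin p0 p) n w ∧ OriginQ1 p0 p n }

/-- `P^(3)(ξ)`: pin words of `ξ` whose origin lies in quadrant 3 w.r.t. the points of `ξ`. -/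
def PinWordsQ3 {n : ℕ} (ξ : Equiv.Perm (Fin n)) : Set (List Letter) :=
  { w | ∃ (p : ℕ → Point) (p0 : Point), IsPinRepr ξ p ∧
        IsPinSeq (withOrigin p0 p) (n + 1) ∧ WordOf (withOrigin p0 p) n w ∧ OriginQ3 p0 p n }

/-- The shuffle product of two sequences of sets of words. -/
def ShuffleSeq : List (Set (List Letter)) → List (Set (List Letter)) → Set (List Letter)
  | [], [] => {[]}
  | X :: As, [] => { w | ∃ x ∈ X, ∃ t ∈ ShuffleSeq As [], w = x ++ t }
  | [], Y :: Bs => { w | ∃ y ∈ Y, ∃ t ∈ ShuffleSeq ([] : List (Set (List Letter))) Bs, w = y ++ t }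
  | X :: As, Y :: Bs =>
      { w | (∃ x ∈ X, ∃ t ∈ ShuffleSeq As (Y :: Bs), w = x ++ t) ∨
            (∃ y ∈ Y, ∃ t ∈ ShuffleSeq (X :: As) Bs, w = y ++ t) }
  termination_by A B => A.length + B.length

/-- The `p`-fold repetition `x^p` of the word `x`. -/
def repW (p : ℕ) (x : List Letter) : List Letter := (List.replicate p x).flatten

/-- The points of `ξ` at positions `i` and `j` form an active knight of `ξ`:
they occur (in some order) as the first two pins of some pin representation of `ξ`. -/
def ActiveKnight {k : ℕ} (ξ : Equiv.Perm (Fin k)) (i j : Fin k) : Prop :=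
  ∃ (p : ℕ → Point) (f : Fin k ≃ Fin k) (h2 : 2 ≤ k),
    IsPinReprWith ξ p f ∧
    ((f ⟨0, by omega⟩ = i ∧ f ⟨1, by omega⟩ = j) ∨
     (f ⟨0, by omega⟩ = j ∧ f ⟨1, by omega⟩ = i))

/-- The points at positions `i`, `j` are in horizontal knight position. -/
def KnightH {k : ℕ} (ξ : Equiv.Perm (Fin k)) (i j : Fin k) : Prop :=
  (i.val + 2 = j.val ∨ j.val + 2 = i.val) ∧
  ((ξ i).val + 1 = (ξ j).val ∨ (ξ j).val + 1 = (ξ i).val)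

/-- The points at positions `i`, `j` are in vertical knight position. -/
def KnightV {k : ℕ} (ξ : Equiv.Perm (Fin k)) (i j : Fin k) : Prop :=
  (i.val + 1 = j.val ∨ j.val + 1 = i.val) ∧
  ((ξ i).val + 2 = (ξ j).val ∨ (ξ j).val + 2 = (ξ i).val)

inductive KType : Type
  | H | V

def KnightOfType {k : ℕ} (t : KType) (ξ : Equiv.Perm (Fin k)) (i j : Fin k) : Prop :=
  match t with
  | .H => KnightH ξ i j
  | .V => KnightV ξ i j

/-- The increasing oscillation `ξ` has type `(x, y)`: its lower-left active knight
(the one containing the leftmost point) has knight-position type `x` and its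
upper-right active knight (the one containing the rightmost point) has type `y`. -/
def HasOscType {k : ℕ} (ξ : Equiv.Perm (Fin k)) (x y : KType) : Prop :=
  ∃ i j i' j' : Fin k, ActiveKnight ξ i j ∧ ActiveKnight ξ i' j' ∧
    i.val = 0 ∧ j'.val + 1 = k ∧ KnightOfType x ξ i j ∧ KnightOfType y ξ i' j'

/-- The permutation 21. -/
def perm21 : Equiv.Perm (Fin 2) := Equiv.swap 0 1

/-- The permutation 12. -/
def perm12 : Equiv.Perm (Fin 2) := Equiv.refl (Fin 2)

def EndsH (w : List Letter) : Prop := w.getLast? = some Letter.R ∨ w.getLast? = some Letter.L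
def EndsV (w : List Letter) : Prop := w.getLast? = some Letter.U ∨ w.getLast? = some Letter.D

/-- `Q⁻`: quasi-strict pin words of 21. -/
def Qminus : Set (List Letter) := { w | w ∈ PinWords perm21 ∧ IsQuasiStrict w }
/-- `S⁻_H`: strict pin words of 21 ending with R or L. -/
def SminusH : Set (List Letter) := { w | w ∈ PinWords perm21 ∧ IsStrict w ∧ EndsH w }
/-- `S⁻_V`: strict pin words of 21 ending with U or D. -/
def SminusV : Set (List Letter) := { w | w ∈ PinWords perm21 ∧ IsStrict w ∧ EndsV w }
/-- `Q⁺`: quasi-strict pin words of 12. -/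
def Qplus : Set (List Letter) := { w | w ∈ PinWords perm12 ∧ IsQuasiStrict w }
/-- `S⁺_H`: strict pin words of 12 ending with R or L. -/
def SplusH : Set (List Letter) := { w | w ∈ PinWords perm12 ∧ IsStrict w ∧ EndsH w }
/-- `S⁺_V`: strict pin words of 12 ending with U or D. -/
def SplusV : Set (List Letter) := { w | w ∈ PinWords perm12 ∧ IsStrict w ∧ EndsV w }

/-- `P^mix(ξ_i, ξ_j)` for `τ = ⊕[ξ_i, ξ_j]` with `|ξ_i| = s1`: pin words associated
with a pin representation of `τ` reading one of the two children in two pieces. -/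
def Pmix {m : ℕ} (τ : Equiv.Perm (Fin m)) (s1 : ℕ) : Set (List Letter) :=
  { w | ∃ (p : ℕ → Point) (p0 : Point) (f : Fin m ≃ Fin m),
      IsPinReprWith τ p f ∧ IsPinSeq (withOrigin p0 p) (m + 1) ∧
      WordOf (withOrigin p0 p) m w ∧
      (ReadInPieces { a : Fin m | (f a).val < s1 } 2 ∨
       ReadInPieces { a : Fin m | s1 ≤ (f a).val } 2) }

/-- The set of words `{13, 23, 33, 43, 1D, 4D}`. -/
def W13D : Set (List Letter) :=
  {[Letter.n1, Letter.n3], [Letter.n2, Letter.n3], [Letter.n3, Letter.n3],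
   [Letter.n4, Letter.n3], [Letter.n1, Letter.D], [Letter.n4, Letter.D]}

/-- The set of words `{13, 23, 33, 43, 1L, 2L}`. -/
def W13L : Set (List Letter) :=
  {[Letter.n1, Letter.n3], [Letter.n2, Letter.n3], [Letter.n3, Letter.n3],
   [Letter.n4, Letter.n3], [Letter.n1, Letter.L], [Letter.n2, Letter.L]}

/-- `M_2 = {UR, UL, DR, DL, RU, RD, LU, LD}`. -/
def M2Set : Set (List Letter) :=
  {[Letter.U, Letter.R], [Letter.U, Letter.L], [Letter.D, Letter.R], [Letter.D, Letter.L],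
   [Letter.R, Letter.U], [Letter.R, Letter.D], [Letter.L, Letter.U], [Letter.L, Letter.D]}

/-- `E^s_π`: the words `φ(u)` for `u ∈ P(π)` strict. -/
def EsSet {n : ℕ} (π : Equiv.Perm (Fin n)) : Set (List Letter) :=
  { v | ∃ u ∈ PinWords π, IsStrict u ∧ v ∈ phiSet u }

/-- `E^qs_π`: the words `φ(u^(2))` for `u = u^(1)u^(2) ∈ P(π)` quasi-strict. -/
def EqsSet {n : ℕ} (π : Equiv.Perm (Fin n)) : Set (List Letter) :=
  { v | ∃ u ∈ PinWords π, IsQuasiStrict u ∧ ∃ u1 u2, IsSNLD u [u1, u2] ∧ v ∈ phiSet u2 }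

/-!
Both sides of the equivalence cut `w` into pieces matched with the strict factors `u^(i)`, so
it suffices to transform one piece at a time. A piece `d :: ds` matched by the direction-led
clause of `≼`, preceded in `w` by the letter `c`, becomes `c :: d :: ds`: it is strict when `c` is
a numeral and lies in `M` otherwise, because two consecutive directions of a pin word are never
parallel (two consecutive separating pins cannot both be extreme along the same axis). Its image
under `φ` contains `φ(u^(i))`, as the quadrant numeral `q(c, d)` is designed for. Conversely, an
occurrence of `φ(a :: s) = P₀ :: P₁ :: s` in `φ(w^(i))` is read back in `w^(i)` either as
`a :: s` itself or as `P₁ :: s` preceded by a letter whose quadrant numeral is `a`.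
-/

open List

lemma IsStrict.ne_nil {v : List Letter} (h : IsStrict v) : v ≠ [] := by
  obtain ⟨c, cs, rfl, -, -⟩ := h
  exact cons_ne_nil c cs

lemma IsStrict.takeWhile_flatten {c : Letter} {cs : List Letter} (h : IsStrict (c :: cs))
    {vs : List (List Letter)} (hvs : ∀ v ∈ vs, IsStrict v) :
    (cs ++ vs.flatten).takeWhile (fun e => !e.isNum) = cs := by
  obtain ⟨_, _, ⟨⟩, -, hcs⟩ := h
  rw [takeWhile_append_of_pos (by simpa [Letter.IsDirection] using hcs)]
  rcases vs with _ | ⟨v, vs⟩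
  · simp
  · obtain ⟨d, ds, rfl, hd, -⟩ := hvs v mem_cons_self
    simp_all [Letter.IsNumeral]

lemma IsSNLD.unique {u : List Letter} {us₁ us₂ : List (List Letter)}
    (h₁ : IsSNLD u us₁) (h₂ : IsSNLD u us₂) : us₁ = us₂ := by
  obtain ⟨rfl, hs₁⟩ := h₁
  obtain ⟨hflat, hs₂⟩ := h₂
  induction us₁ generalizing us₂ with
  | nil =>
    rcases us₂ with _ | ⟨v, vs⟩
    · rfl
    · simp [(hs₂ v mem_cons_self).ne_nil] at hflat
  | cons v vs ih =>
    rcases us₂ with _ | ⟨v', vs'⟩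
    · simp [(hs₁ v mem_cons_self).ne_nil] at hflat
    obtain ⟨c, cs, rfl, -, -⟩ := hs₁ v mem_cons_self
    obtain ⟨c', cs', rfl, -, -⟩ := hs₂ v' mem_cons_self
    simp only [flatten_cons, cons_append, cons.injEq] at hflat
    obtain ⟨rfl, htail⟩ := hflat
    have hcs : cs' = cs := by
      rw [← (hs₁ _ mem_cons_self).takeWhile_flatten (fun x hx => hs₁ x (mem_cons_of_mem _ hx)),
        ← (hs₂ _ mem_cons_self).takeWhile_flatten (fun x hx => hs₂ x (mem_cons_of_mem _ hx)),
        htail]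
    subst hcs
    rw [ih (fun x hx => hs₁ x (mem_cons_of_mem _ hx)) (append_cancel_left htail)
      (fun x hx => hs₂ x (mem_cons_of_mem _ hx))]

def InterleaveFactorization (C : List Letter → List Letter → List Letter → Prop)
    (us : List (List Letter)) (w : List Letter) : Prop :=
  ∃ vs ws : List (List Letter), ws.length = us.length ∧ vs.length = us.length + 1 ∧
    w = interleave vs ws ∧ ∀ i < us.length, C (vs.getD i []) (ws.getD i []) (us.getD i [])

def Factorization (C : List Letter → List Letter → List Letter → Prop) :
    List (List Letter) → List Letter → Prop
  | [], _ => True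
  | ui :: us, w => ∃ v wi r, w = v ++ wi ++ r ∧ C v wi ui ∧ Factorization C us r

lemma interleaveFactorization_iff (C : List Letter → List Letter → List Letter → Prop)
    (us : List (List Letter)) (w : List Letter) :
    InterleaveFactorization C us w ↔ Factorization C us w := by
  induction us generalizing w with
  | nil => exact ⟨fun _ => trivial, fun _ => ⟨[w], [], rfl, rfl, by simp [interleave], by simp⟩⟩
  | cons ui us ih =>
    constructor
    · rintro ⟨_ | ⟨v, vs⟩, _ | ⟨wi, ws⟩, hlw, hlv, rfl, hC⟩
      · simp at hlv
      · simp at hlv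
      · simp at hlw
      refine ⟨v, wi, interleave vs ws, rfl, by simpa using hC 0 (by simp), ?_⟩
      exact (ih _).1 ⟨vs, ws, by simpa using hlw, by simpa using hlv, rfl,
        fun i hi => by simpa using hC (i + 1) (by simpa using hi)⟩
    · rintro ⟨v, wi, r, rfl, hC, hr⟩
      obtain ⟨vs, ws, hlw, hlv, rfl, hCs⟩ := (ih r).2 hr
      refine ⟨v :: vs, wi :: ws, by simp [hlw], by simp [hlv], rfl, ?_⟩
      rintro (_ | i) hi
      · simpa using hC
      · simpa using hCs i (by simpa using hi)

section Geometry

variable {q : ℕ → Point} {i : ℕ}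

/-- The horizontal line through a pin lying above or below all earlier pins separates nothing,
so such a pin can only be separated by its vertical line. -/
lemma vLineSep_of_sepCond (hi : 2 ≤ i) (hs : SepCond q i)
    (he : AboveAll q i ∨ BelowAll q i) : VLineSep q i := by
  refine hs.resolve_right ?_
  rintro (⟨h1, h2⟩ | ⟨h1, h2⟩) <;> rcases he with he | he
  · exact (h2 0 (by omega)).not_gt (he 0 (by omega))
  · exact h1.not_gt (he (i - 1) (by omega))
  · exact h1.not_gt (he (i - 1) (by omega))
  · exact (h2 0 (by omega)).not_gt (he 0 (by omega))

lemma VLineSep.splits (hi : 2 ≤ i) (h : VLineSep q i) :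
    (∃ j < i, (q j).1 < (q i).1) ∧ ∃ j < i, (q i).1 < (q j).1 := by
  rcases h with ⟨h1, h2⟩ | ⟨h1, h2⟩
  · exact ⟨⟨i - 1, by omega, h1⟩, ⟨0, by omega, h2 0 (by omega)⟩⟩
  · exact ⟨⟨0, by omega, h2 0 (by omega)⟩, ⟨i - 1, by omega, h1⟩⟩

lemma not_vLineSep_succ_of_splits (hsplit : (∃ j < i, (q j).1 < (q i).1) ∧
    ∃ j < i, (q i).1 < (q j).1) : ¬VLineSep q (i + 1) := by
  obtain ⟨⟨j, hj, hlt⟩, ⟨j', hj', hgt⟩⟩ := hsplit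
  rintro (⟨h1, h2⟩ | ⟨h1, h2⟩)
  · exact (h2 j (by omega)).not_gt (by simpa using hlt.trans h1)
  · exact (h2 j' (by omega)).not_gt (by simpa using h1.trans hgt)

lemma not_sepCond_vertical_succ (hi : 2 ≤ i) (hs : SepCond q i) (hs' : SepCond q (i + 1))
    (he : AboveAll q i ∨ BelowAll q i) : ¬(AboveAll q (i + 1) ∨ BelowAll q (i + 1)) :=
  fun he' => not_vLineSep_succ_of_splits ((vLineSep_of_sepCond hi hs he).splits hi)
    (vLineSep_of_sepCond (by omega) hs' he')

lemma not_sepCond_horizontal_succ (hi : 2 ≤ i) (hs : SepCond q i) (hs' : SepCond q (i + 1))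
    (he : RightAll q i ∨ LeftAll q i) : ¬(RightAll q (i + 1) ∨ LeftAll q (i + 1)) :=
  not_sepCond_vertical_succ (q := Prod.swap ∘ q) hi hs.symm hs'.symm he

end Geometry

/-- Neither both vertical nor both horizontal; for directions this means perpendicular. -/
def NotParallel (a b : Letter) : Prop := ¬(IsVert a ∧ IsVert b) ∧ ¬(IsHoriz a ∧ IsHoriz b)

lemma LetterIs.of_isVert {q : ℕ → Point} {i : ℕ} {c : Letter} (h : LetterIs q i c)
    (hc : IsVert c) : 2 ≤ i ∧ SepCond q i ∧ (AboveAll q i ∨ BelowAll q i) := by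
  rcases hc with rfl | rfl
  · exact ⟨h.1, h.2.1, Or.inl h.2.2⟩
  · exact ⟨h.1, h.2.1, Or.inr h.2.2⟩

lemma LetterIs.of_isHoriz {q : ℕ → Point} {i : ℕ} {c : Letter} (h : LetterIs q i c)
    (hc : IsHoriz c) : 2 ≤ i ∧ SepCond q i ∧ (RightAll q i ∨ LeftAll q i) := by
  rcases hc with rfl | rfl
  · exact ⟨h.1, h.2.1, Or.inr h.2.2⟩
  · exact ⟨h.1, h.2.1, Or.inl h.2.2⟩

lemma getD_append_append_length_add {s z t : List Letter} {i : ℕ} (hi : i < z.length)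
    (d : Letter) : (s ++ z ++ t).getD (s.length + i) d = z.getD i d := by
  rw [append_assoc, getD_append_right _ _ _ _ (by omega), Nat.add_sub_cancel_left,
    getD_append _ _ _ _ hi]

lemma WordOf.letterIs_infix {q : ℕ → Point} {n : ℕ} {s z t : List Letter}
    (h : WordOf q n (s ++ z ++ t)) {i : ℕ} (hi : i < z.length) :
    LetterIs q (s.length + i + 1) (z.getD i Letter.U) := by
  have hn : s.length + z.length ≤ n := by rw [← h.1]; simp
  rw [← getD_append_append_length_add hi]
  exact h.2 (s.length + i) (by omega)

lemma IsPinWord.notParallel {W : List Letter} (hW : IsPinWord W) {a b : Letter}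
    (hab : [a, b] <:+: W) : NotParallel a b := by
  obtain ⟨n, σ, p, p0, -, -, hword⟩ := hW
  obtain ⟨s, t, rfl⟩ := hab
  have ha := hword.letterIs_infix (i := 0) (by simp)
  have hb := hword.letterIs_infix (i := 1) (by simp)
  simp only [getD_cons_zero, getD_cons_succ] at ha hb
  constructor
  · rintro ⟨hva, hvb⟩
    obtain ⟨hi, hs, he⟩ := ha.of_isVert hva
    obtain ⟨-, hs', he'⟩ := hb.of_isVert hvb
    exact not_sepCond_vertical_succ hi hs hs' he he'
  · rintro ⟨hha, hhb⟩
    obtain ⟨hi, hs, he⟩ := ha.of_isHoriz hha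
    obtain ⟨-, hs', he'⟩ := hb.of_isHoriz hhb
    exact not_sepCond_horizontal_succ hi hs hs' he he'

lemma mem_MSet_of_infix {W z : List Letter} (hW : IsPinWord W) (hz : z <:+: W)
    (hdir : ∀ c ∈ z, c.IsDirection) (hlen : 2 ≤ z.length) : z ∈ MSet :=
  ⟨hlen, hdir, fun _ _ hac => hW.notParallel (hac.trans hz)⟩

section Shift

variable {q : ℕ → Point} {off i : ℕ}

lemma AboveAll.shift (h : AboveAll q (off + i)) : AboveAll (fun k => q (off + k)) i :=
  fun j hj => h (off + j) (by omega)

lemma BelowAll.shift (h : BelowAll q (off + i)) : BelowAll (fun k => q (off + k)) i :=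
  fun j hj => h (off + j) (by omega)

lemma RightAll.shift (h : RightAll q (off + i)) : RightAll (fun k => q (off + k)) i :=
  fun j hj => h (off + j) (by omega)

lemma LeftAll.shift (h : LeftAll q (off + i)) : LeftAll (fun k => q (off + k)) i :=
  fun j hj => h (off + j) (by omega)

lemma OutsideBox.shift (h : OutsideBox q (off + i)) : OutsideBox (fun k => q (off + k)) i := by
  rcases h with h | h | h | h
  · exact Or.inl h.shift
  · exact Or.inr (Or.inl h.shift)
  · exact Or.inr (Or.inr (Or.inl h.shift))
  · exact Or.inr (Or.inr (Or.inr h.shift))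

lemma SepCond.shift (hi : 1 ≤ i) (h : SepCond q (off + i)) :
    SepCond (fun k => q (off + k)) i := by
  simp only [SepCond, VLineSep, HLineSep, show off + i - 1 = off + (i - 1) by omega] at h ⊢
  rcases h with (⟨ha, hb⟩ | ⟨ha, hb⟩) | (⟨ha, hb⟩ | ⟨ha, hb⟩)
  · exact Or.inl (Or.inl ⟨ha, fun j hj => hb (off + j) (by omega)⟩)
  · exact Or.inl (Or.inr ⟨ha, fun j hj => hb (off + j) (by omega)⟩)
  · exact Or.inr (Or.inl ⟨ha, fun j hj => hb (off + j) (by omega)⟩)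
  · exact Or.inr (Or.inr ⟨ha, fun j hj => hb (off + j) (by omega)⟩)

lemma IndepCond.shift (h : IndepCond q (off + i)) : IndepCond (fun k => q (off + k)) i := by
  constructor
  · rintro ⟨⟨j, hj, hlt⟩, ⟨j', hj', hgt⟩⟩
    exact h.1 ⟨⟨off + j, by omega, hlt⟩, ⟨off + j', by omega, hgt⟩⟩
  · rintro ⟨⟨j, hj, hlt⟩, ⟨j', hj', hgt⟩⟩
    exact h.2 ⟨⟨off + j, by omega, hlt⟩, ⟨off + j', by omega, hgt⟩⟩

lemma LetterIs.shift {c : Letter} (h : LetterIs q (off + i) c) (hc : c.IsDirection → 2 ≤ i) :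
    LetterIs (fun k => q (off + k)) i c := by
  cases c
  case n1 | n2 | n3 | n4 => exact ⟨h.1.shift, h.2.1.shift, h.2.2.shift⟩
  case U | D | L | R => exact ⟨hc rfl, h.2.1.shift (by have := hc rfl; omega), h.2.2.shift⟩

lemma IsPinSeq.shift {n : ℕ} (h : IsPinSeq q n) (off m : ℕ) (hm : off + m ≤ n) :
    IsPinSeq (fun k => q (off + k)) m :=
  ⟨fun i hi j hj hij => h.1 (off + i) (by omega) (off + j) (by omega) (by omega),
    fun i h1 h2 => (h.2 (off + i) (by omega) (by omega)).imp OutsideBox.shift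
      (Or.imp (SepCond.shift h1) IndepCond.shift)⟩

end Shift

lemma exists_equiv_lt_iff_of_injective {m : ℕ} {X : Fin m → ℝ} (hX : Function.Injective X) :
    ∃ e : Fin m ≃ Fin m, ∀ a b, X a < X b ↔ e a < e b := by
  have hsort : StrictMono (X ∘ Tuple.sort X) :=
    (Tuple.monotone_sort X).strictMono_of_injective (hX.comp (Equiv.injective _))
  refine ⟨(Tuple.sort X).symm, fun a b => ?_⟩
  simpa using hsort.lt_iff_lt (a := (Tuple.sort X).symm a) (b := (Tuple.sort X).symm b)

lemma IsPinSeq.exists_isPinRepr {p : ℕ → Point} {n : ℕ} (h : IsPinSeq p n) :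
    ∃ σ : Equiv.Perm (Fin n), IsPinRepr σ p := by
  have hinj (a b : Fin n) (hab : a ≠ b) := h.1 a a.isLt b b.isLt (Fin.val_ne_of_ne hab)
  obtain ⟨eX, heX⟩ := exists_equiv_lt_iff_of_injective (X := fun a : Fin n => (p a).1)
    fun a b hab => by_contra fun hne => (hinj a b hne).1 hab
  obtain ⟨eY, heY⟩ := exists_equiv_lt_iff_of_injective (X := fun a : Fin n => (p a).2)
    fun a b hab => by_contra fun hne => (hinj a b hne).2 hab
  exact ⟨eX.symm.trans eY, eX, h, fun a b => ⟨heX a b, by simpa using heY a b⟩⟩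

/-- A strict factor of a pin word is read by the corresponding consecutive pins, taking the pin
just before them as origin. -/
lemma IsPinWord.of_infix {W z : List Letter} (hW : IsPinWord W) (hz : z <:+: W)
    (hs : IsStrict z) : IsPinWord z := by
  obtain ⟨s, t, rfl⟩ := hz
  obtain ⟨n, σ, p, p0, ⟨-, hrep, -⟩, hseq, hword⟩ := hW
  have hn : s.length + z.length ≤ n := by rw [← hword.1]; simp
  obtain ⟨τ, hτ⟩ := (hrep.shift s.length z.length hn).exists_isPinRepr
  have horigin : withOrigin (withOrigin p0 p s.length) (fun k => p (s.length + k)) =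
      fun k => withOrigin p0 p (s.length + k) := by
    funext k; cases k <;> rfl
  refine ⟨z.length, τ, _, _, hτ, horigin ▸ hseq.shift _ _ (by omega), rfl, fun i hi => ?_⟩
  rw [horigin]
  refine LetterIs.shift (off := s.length) (hword.letterIs_infix hi) fun hdir => ?_
  obtain ⟨c, cs, rfl, hc, -⟩ := hs
  rcases i with _ | i
  · exact Bool.noConfusion (hc.symm.trans hdir)
  · omega

section Phi

lemma phi2_of_isNumeral {c d : Letter} (hc : c.IsNumeral) (hd : d.IsDirection) :
    ∃ A B, phi2 c d = [A, B, d] ∧ B.IsDirection ∧ NotParallel B d := by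
  cases c <;> cases d <;> simp_all [Letter.IsNumeral, Letter.IsDirection, Letter.isNum, phi2,
    NotParallel, IsVert, IsHoriz]

lemma quadNum_of_phi2 {c d A B : Letter} (hc : c.IsNumeral) (h : phi2 c d = [A, B, d]) :
    quadNum c d = phiInv2 B d := by
  simp [quadNum, show c.isNum = true from hc, h]

lemma quadNum_of_isDirection {c d : Letter} (hc : c.IsDirection) : quadNum c d = phiInv2 c d := by
  simp [quadNum, show c.isNum = false from hc]

lemma cons_cons_mem_phiSet_phiInv2 {a b : Letter} {ds : List Letter} (ha : a.IsDirection)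
    (hb : b.IsDirection) (hab : NotParallel a b)
    (hds : ∀ e t, ds = e :: t → e.IsDirection ∧ NotParallel b e) :
    a :: b :: ds ∈ phiSet (phiInv2 a b :: ds) := by
  rcases ds with _ | ⟨e, t⟩
  · cases a <;> cases b <;> simp_all [Letter.IsDirection, Letter.isNum, NotParallel, IsVert,
      IsHoriz, phiSet, phi1, phiInv2]
  · obtain ⟨he, hbe⟩ := hds e t rfl
    cases a <;> cases b <;> cases e <;> simp_all [Letter.IsDirection, Letter.isNum, NotParallel,
      IsVert, IsHoriz, phiSet, phi2, phiInv2]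

lemma IsStrict.phiSet_nonempty {ui : List Letter} (h : IsStrict ui) : (phiSet ui).Nonempty := by
  obtain ⟨c, _ | ⟨d, ds⟩, rfl, hc, -⟩ := h
  · cases c <;> simp_all [Letter.IsNumeral, Letter.isNum, phiSet, phi1]
  · exact ⟨phi2 c d ++ ds, by simp [phiSet, show c.isNum = true from hc]⟩

lemma IsStrict.exists_of_mem_phiSet {a : Letter} {s pu : List Letter} (hs : IsStrict (a :: s))
    (hpu : pu ∈ phiSet (a :: s)) :
    ∃ P₀ P₁, pu = P₀ :: P₁ :: s ∧ P₀.IsDirection ∧ P₁.IsDirection ∧ phiInv2 P₀ P₁ = a ∧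
      ∀ e t, s = e :: t → phi2 a e = [P₀, P₁, e] := by
  obtain ⟨_, _, ⟨⟩, ha, hs⟩ := hs
  rcases s with _ | ⟨d, ds⟩
  · cases a <;> simp_all [Letter.IsNumeral, Letter.IsDirection, Letter.isNum, phiSet, phi1,
      phiInv2] <;> rcases hpu with rfl | rfl <;> simp
  · have hd : d.IsDirection := hs d mem_cons_self
    cases a <;> cases d <;> simp_all [Letter.IsNumeral, Letter.IsDirection, Letter.isNum, phiSet,
      phi2, phiInv2]

end Phi

def HasPhiFactor (wi ui : List Letter) : Prop :=
  wi ∈ SPset ∪ MSet ∧ ∃ pw ∈ phiSet wi, ∃ pu ∈ phiSet ui, pu <:+: pw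

lemma hasPhiFactor_cons_cons {W : List Letter} {c d : Letter} {ds : List Letter}
    (hW : IsPinWord W) (hz : c :: d :: ds <:+: W) (hd : d.IsDirection)
    (hds : ∀ e ∈ ds, e.IsDirection) : HasPhiFactor (c :: d :: ds) (quadNum c d :: ds) := by
  have hturn (e : Letter) (t : List Letter) (het : ds = e :: t) :
      e.IsDirection ∧ NotParallel d e := by
    subst het
    exact ⟨hds e mem_cons_self, hW.notParallel (.trans ⟨[c], t, rfl⟩ hz)⟩
  by_cases hc : c.IsNumeral
  · obtain ⟨A, B, hAB, hB, hBd⟩ := phi2_of_isNumeral hc hd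
    have hstrict : IsStrict (c :: d :: ds) :=
      ⟨c, d :: ds, rfl, hc, forall_mem_cons.2 ⟨hd, hds⟩⟩
    refine ⟨Or.inl ⟨hW.of_infix hz hstrict, hstrict⟩, phi2 c d ++ ds,
      by simp [phiSet, show c.isNum = true from hc], B :: d :: ds, ?_, ?_⟩
    · rw [quadNum_of_phi2 hc hAB]
      exact cons_cons_mem_phiSet_phiInv2 hB hd hBd hturn
    · rw [hAB]
      exact ⟨[A], [], by simp⟩
  · have hc : c.IsDirection := by simpa [Letter.IsNumeral, Letter.IsDirection] using hc
    have hcd : NotParallel c d := hW.notParallel (.trans ⟨[], ds, rfl⟩ hz)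
    refine ⟨Or.inr (mem_MSet_of_infix hW hz (forall_mem_cons.2 ⟨hc, forall_mem_cons.2 ⟨hd, hds⟩⟩)
      (by simp)), c :: d :: ds, by simp [phiSet, show c.isNum = false from hc], c :: d :: ds,
      ?_, infix_refl _⟩
    rw [quadNum_of_isDirection hc]
    exact cons_cons_mem_phiSet_phiInv2 hc hd hcd hturn

lemma exists_hasPhiFactor_of_pieceCond {W v wi ui : List Letter} (hW : IsPinWord W)
    (hinf : v ++ wi <:+: W) (hui : IsStrict ui) (h : PieceCond v wi ui) :
    ∃ v' wi', v ++ wi = v' ++ wi' ∧ HasPhiFactor wi' ui := by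
  rcases h with ⟨-, -, -, -, rfl⟩ | ⟨d, ds, c, rfl, hd, -, hlast, rfl⟩
  · obtain ⟨pu, hpu⟩ := hui.phiSet_nonempty
    exact ⟨v, wi, rfl, Or.inl ⟨hW.of_infix ((suffix_append v wi).isInfix.trans hinf) hui, hui⟩,
      pu, hpu, pu, hpu, infix_refl pu⟩
  · obtain ⟨v₀, rfl⟩ := getLast?_eq_some_iff.1 hlast
    obtain ⟨_, _, heq, -, hds⟩ := hui
    obtain ⟨-, rfl⟩ := cons.inj heq
    exact ⟨v₀, c :: d :: ds, by simp,
      hasPhiFactor_cons_cons hW (.trans ⟨v₀, [], by simp⟩ hinf) hd hds⟩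

lemma PieceCond.append_left {v wi ui : List Letter} (h : PieceCond v wi ui) (v₀ : List Letter) :
    PieceCond (v₀ ++ v) wi ui := by
  rcases h with h | ⟨d, ds, c, hwi, hd, hv, hlast, hui⟩
  · exact Or.inl h
  · exact Or.inr ⟨d, ds, c, hwi, hd, by simp [hv], by rwa [getLast?_append_of_ne_nil _ hv], hui⟩

lemma pieceCond_snoc (v : List Letter) {c d : Letter} (ds : List Letter) (hd : d.IsDirection) :
    PieceCond (v ++ [c]) (d :: ds) (quadNum c d :: ds) :=
  Or.inr ⟨d, ds, c, rfl, hd, by simp, by simp, rfl⟩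

lemma phiSet_of_mem_MSet {w : List Letter} (hw : w ∈ MSet) : phiSet w = {w} := by
  obtain ⟨hlen, hdir, -⟩ := hw
  obtain ⟨c, d, ds, rfl⟩ : ∃ c d ds, w = c :: d :: ds := by
    rcases w with _ | ⟨c, _ | ⟨d, ds⟩⟩ <;> simp_all
  simp [phiSet, show c.isNum = false from hdir c mem_cons_self]

lemma exists_pieceCond_of_hasPhiFactor {wi ui : List Letter} (hui : IsStrict ui)
    (h : HasPhiFactor wi ui) : ∃ v wi' r, wi = v ++ wi' ++ r ∧ PieceCond v wi' ui := by
  obtain ⟨hwi, pw, hpw, pu, hpu, x, y, hxy⟩ := h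
  obtain ⟨a, s, rfl, ha, -⟩ := id hui
  obtain ⟨P₀, P₁, rfl, hP₀, hP₁, hinv, -⟩ := hui.exists_of_mem_phiSet hpu
  have hq : quadNum P₀ P₁ = a := by rw [quadNum_of_isDirection hP₀, hinv]
  rcases hwi with ⟨-, c, t, rfl, hc, ht⟩ | hM
  · obtain ⟨Q₀, Q₁, rfl, -, -, hQ, hphi⟩ := IsStrict.exists_of_mem_phiSet ⟨c, t, rfl, hc, ht⟩ hpw
    rcases x with _ | ⟨X, _ | ⟨X', x⟩⟩
    · simp only [nil_append, cons_append, cons.injEq] at hxy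
      obtain ⟨rfl, rfl, rfl⟩ := hxy
      obtain rfl : a = c := hinv.symm.trans hQ
      exact ⟨[], a :: s, y, by simp, Or.inl ⟨a, s, rfl, ha, rfl⟩⟩
    · simp only [cons_append, nil_append, cons.injEq] at hxy
      obtain ⟨-, rfl, rfl⟩ := hxy
      have hq' : quadNum c P₁ = a := by
        rw [quadNum_of_phi2 hc (hphi P₁ (s ++ y) (by simp)), hinv]
      exact ⟨[c], P₁ :: s, y, by simp, hq' ▸ pieceCond_snoc [] s hP₁⟩
    · simp only [cons_append, cons.injEq] at hxy
      obtain ⟨-, -, rfl⟩ := hxy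
      exact ⟨c :: x ++ [P₀], P₁ :: s, y, by simp, hq ▸ pieceCond_snoc (c :: x) s hP₁⟩
  · obtain rfl : pw = wi := by simpa [phiSet_of_mem_MSet hM] using hpw
    subst hxy
    exact ⟨x ++ [P₀], P₁ :: s, y, by simp, hq ▸ pieceCond_snoc x s hP₁⟩

lemma Factorization.hasPhiFactor {W : List Letter} (hW : IsPinWord W) :
    ∀ {us : List (List Letter)} {w : List Letter}, (∀ ui ∈ us, IsStrict ui) → w <:+: W →
      Factorization PieceCond us w → Factorization (fun _ => HasPhiFactor) us w
  | [], _, _, _, _ => trivial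
  | ui :: us, _, hus, hw, ⟨v, wi, r, hvwr, hC, hr⟩ => by
    subst hvwr
    obtain ⟨v', wi', heq, hF⟩ := exists_hasPhiFactor_of_pieceCond hW
      ((prefix_append _ r).isInfix.trans hw) (hus ui mem_cons_self) hC
    exact ⟨v', wi', r, by rw [← heq], hF, Factorization.hasPhiFactor hW
      (fun x hx => hus x (mem_cons_of_mem _ hx)) ((suffix_append _ r).isInfix.trans hw) hr⟩

lemma Factorization.append_left {us : List (List Letter)} {r : List Letter}
    (h : Factorization PieceCond us r) (r' : List Letter) :
    Factorization PieceCond us (r' ++ r) := by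
  cases us with
  | nil => trivial
  | cons ui us =>
    obtain ⟨v, wi, t, rfl, hC, ht⟩ := h
    exact ⟨r' ++ v, wi, t, by simp, hC.append_left r', ht⟩

lemma Factorization.pieceCond :
    ∀ {us : List (List Letter)} {w : List Letter}, (∀ ui ∈ us, IsStrict ui) →
      Factorization (fun _ => HasPhiFactor) us w → Factorization PieceCond us w
  | [], _, _, _ => trivial
  | ui :: us, _, hus, ⟨v, wi, r, hvwr, hF, hr⟩ => by
    subst hvwr
    obtain ⟨v', wi', r', rfl, hC⟩ := exists_pieceCond_of_hasPhiFactor (hus ui mem_cons_self) hF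
    exact ⟨v ++ v', wi', r' ++ r, by simp, hC.append_left v,
      (Factorization.pieceCond (fun x hx => hus x (mem_cons_of_mem _ hx)) hr).append_left r'⟩

theorem statement_4_general (u w : List Letter) (hw : IsPinWord w)
    (us : List (List Letter)) (hus : IsSNLD u us) :
    PinOrder u w ↔
      ∃ vs ws : List (List Letter), ws.length = us.length ∧ vs.length = us.length + 1 ∧
        w = interleave vs ws ∧
        ∀ i < us.length, (ws.getD i [] ∈ SPset ∪ MSet) ∧
          ∃ pw ∈ phiSet (ws.getD i []), ∃ pu ∈ phiSet (us.getD i []), pu <:+: pw := by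
  change (∃ us', IsSNLD u us' ∧ InterleaveFactorization PieceCond us' w) ↔
    InterleaveFactorization (fun _ => HasPhiFactor) us w
  constructor
  · rintro ⟨us', hus', h⟩
    obtain rfl := hus'.unique hus
    rw [interleaveFactorization_iff] at h ⊢
    exact h.hasPhiFactor hw hus.2 (infix_refl w)
  · intro h
    rw [interleaveFactorization_iff] at h
    exact ⟨us, hus, (interleaveFactorization_iff _ _ _).2 (h.pieceCond hus.2)⟩

/-- For pin words `u`, `w` with strong numeral-led factor decomposition
`u = u^(1) … u^(j)`: `u ≼ w` iff `w` factors as `v^(1)w^(1) … v^(j)w^(j)v^(j+1)` with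
every `w^(i) ∈ SP ∪ M` and `φ(w^(i))` having a factor in `φ(u^(i))`. -/
theorem statement_4 (u w : List Letter) (hu : IsPinWord u) (hw : IsPinWord w)
    (us : List (List Letter)) (hus : IsSNLD u us) :
    PinOrder u w ↔
      ∃ vs ws : List (List Letter), ws.length = us.length ∧ vs.length = us.length + 1 ∧
        w = interleave vs ws ∧
        ∀ i < us.length, (ws.getD i [] ∈ SPset ∪ MSet) ∧
          ∃ pw ∈ phiSet (ws.getD i []), ∃ pu ∈ phiSet (us.getD i []), pu <:+: pw :=
  statement_4_general u w hw us hus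

end PinStmt
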